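/- For any head-to-head voting rule F on the domain of all profiles of strict weak orders, F is margin-based if and only if F satisfies Nonlinear Neutral Reversal and Neutral Indifference. -/

import Mathlib

/- Formalization of voting with ranked ballots (strict preference ballots).
A profile assigns to each voter in a finite voter set a binary relation
(intended: a strict weak order) on the candidate set `X`. -/

open scoped Classical

noncomputable section

structure Profile (V X : Type*) where
  voters : Finset V
  ballot : V → X → X → Prop

variable {V X α : Type*}

namespace Profile

/-- Number of voters ranking `a` strictly above `b`. -/
def count (P : Profile V X) (a b : X) : ℕ :=
  (P.voters.filter (fun i => P.ballot i a b)).card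

/-- The margin of `a` over `b`. -/
def margin (P : Profile V X) (a b : X) : ℤ :=
  (P.count a b : ℤ) - (P.count b a : ℤ)

/-- Replace the ballot of voter `i` by `R`. -/
def updBallot (P : Profile V X) (i : V) (R : X → X → Prop) : Profile V X :=
  ⟨P.voters, Function.update P.ballot i R⟩

/-- Add a new voter `i` with ballot `R`. -/
def addVoter (P : Profile V X) (i : V) (R : X → X → Prop) : Profile V X :=
  ⟨insert i P.voters, Function.update P.ballot i R⟩

/-- Double a profile, giving each voter a twin (via the fresh injection `φ`)
with the same ballot. -/
def double [Nonempty V] (P : Profile V X) (φ : V → V) : Profile V X :=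
  ⟨P.voters ∪ P.voters.image φ,
    fun i => if i ∈ P.voters then P.ballot i else P.ballot (Function.invFun φ i)⟩

end Profile

/-- `R` is a strict weak order: asymmetric and negatively transitive. -/
def IsSWO (R : X → X → Prop) : Prop :=
  (∀ a b, R a b → ¬ R b a) ∧ (∀ a b c, ¬ R a b → ¬ R b c → ¬ R a c)

/-- `R` is a (strict) linear order. -/
def IsLin (R : X → X → Prop) : Prop :=
  IsSWO R ∧ ∀ a b, a ≠ b → R a b ∨ R b a

/-- `x` is ranked immediately above `y` in `R`. -/
def ImmAbove (R : X → X → Prop) (x y : X) : Prop :=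
  R x y ∧ ∀ z, ¬ (R x z ∧ R z y)

/-- Flip the adjacent pair: `x` above `y` becomes `y` above `x`. -/
def flipPair (R : X → X → Prop) (x y : X) : X → X → Prop := fun a b =>
  if a = x ∧ b = y then False else if a = y ∧ b = x then True else R a b

/-- Voter `i` switches from ranking `x` immediately above `y` to ranking `y`
immediately above `x`. -/
def Profile.flipAt (P : Profile V X) (i : V) (x y : X) : Profile V X :=
  P.updBallot i (flipPair (P.ballot i) x y)

/-- All voters in `I` switch from ranking `x` immediately above `y` to ranking
`y` immediately above `x`. -/
def Profile.flipSet (P : Profile V X) (I : Finset V) (x y : X) : Profile V X :=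
  ⟨P.voters, fun i => if i ∈ I then flipPair (P.ballot i) x y else P.ballot i⟩

/-- The domain of all profiles (of strict weak orders). -/
def SWOProfiles (V X : Type*) : Set (Profile V X) :=
  {P | P.voters.Nonempty ∧ ∀ i ∈ P.voters, IsSWO (P.ballot i)}

/-- The domain of all linear profiles. -/
def LinProfiles (V X : Type*) : Set (Profile V X) :=
  {P | P.voters.Nonempty ∧ ∀ i ∈ P.voters, IsLin (P.ballot i)}

/-- A linear order with bottom indifference: a strict weak order in which tied
candidates are not ranked strictly above any candidate. -/
def IsLOBI (R : X → X → Prop) : Prop :=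
  IsSWO R ∧ ∀ x y, x ≠ y → ¬ R x y → ¬ R y x → ∀ z, ¬ R x z

/-- The LOBI domain. -/
def LOBIProfiles (V X : Type*) : Set (Profile V X) :=
  {P | P.voters.Nonempty ∧ ∀ i ∈ P.voters, IsLOBI (P.ballot i)}

/-- `Y` is a tie (non-singleton indifference class) of `R`. -/
def IsTie (R : X → X → Prop) (Y : Finset X) : Prop :=
  2 ≤ Y.card ∧ (∀ x ∈ Y, ∀ y ∈ Y, ¬ R x y) ∧
    ∀ z, z ∉ Y → ∀ y ∈ Y, R z y ∨ R y z

/-- `L` is a strict linear order of the members of `Y` (confined to `Y`). -/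
def StrictLinOn (L : X → X → Prop) (Y : Finset X) : Prop :=
  (∀ a b, L a b → a ∈ Y ∧ b ∈ Y) ∧ (∀ a, ¬ L a a) ∧
    (∀ a b c, L a b → L b c → L a c) ∧
    ∀ a ∈ Y, ∀ b ∈ Y, a ≠ b → L a b ∨ L b a

/-- Replace the tie `Y` in `R` by the linear order `L` of `Y`. -/
def breakTie (R : X → X → Prop) (Y : Finset X) (L : X → X → Prop) :
    X → X → Prop := fun a b => R a b ∨ (a ∈ Y ∧ b ∈ Y ∧ L a b)

/-- A domain is rich if it is closed under flipping two adjacent candidates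
in a voter's ranking. -/
def Rich (D : Set (Profile V X)) : Prop :=
  ∀ P ∈ D, ∀ i ∈ P.voters, ∀ x y : X,
    ImmAbove (P.ballot i) x y → P.flipAt i x y ∈ D

/-- Preferential Equality. -/
def PrefEqual (D : Set (Profile V X)) (F : Profile V X → α) : Prop :=
  ∀ P ∈ D, ∀ x y : X, ∀ i ∈ P.voters, ∀ j ∈ P.voters, i ≠ j →
    ImmAbove (P.ballot i) x y → ImmAbove (P.ballot j) x y →
    P.flipAt i x y ∈ D → P.flipAt j x y ∈ D →
    F (P.flipAt i x y) = F (P.flipAt j x y)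

/-- Preferential Compensation. -/
def PrefComp (D : Set (Profile V X)) (F : Profile V X → α) : Prop :=
  ∀ P ∈ D, ∀ x y : X, ∀ i ∈ P.voters, ∀ j ∈ P.voters, i ≠ j →
    ImmAbove (P.ballot i) x y → ImmAbove (P.ballot j) y x →
    (P.flipAt i x y).flipAt j y x ∈ D →
    F P = F ((P.flipAt i x y).flipAt j y x)

/-- Neutral Reversal: adding a reversal pair of linear ballots does not change
the outcome. -/
def NeutralReversal (D : Set (Profile V X)) (F : Profile V X → α) : Prop :=
  ∀ P ∈ D, ∀ i j : V, i ∉ P.voters → j ∉ P.voters → i ≠ j →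
    ∀ R : X → X → Prop, IsLin R →
    (P.addVoter i R).addVoter j (fun a b => R b a) ∈ D →
    F P = F ((P.addVoter i R).addVoter j (fun a b => R b a))

/-- Nonlinear Neutral Reversal: adding a reversal pair of strict weak order
ballots does not change the outcome. -/
def NonlinearNeutralReversal (D : Set (Profile V X)) (F : Profile V X → α) : Prop :=
  ∀ P ∈ D, ∀ i j : V, i ∉ P.voters → j ∉ P.voters → i ≠ j →
    ∀ R : X → X → Prop, IsSWO R →
    (P.addVoter i R).addVoter j (fun a b => R b a) ∈ D →
    F P = F ((P.addVoter i R).addVoter j (fun a b => R b a))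

/-- Tiebreaking Compensation. -/
def TiebreakComp (D : Set (Profile V X)) (F : Profile V X → α) : Prop :=
  ∀ P ∈ D, ∀ i ∈ P.voters, ∀ j ∈ P.voters, i ≠ j →
    ∀ (Y : Finset X) (L : X → X → Prop),
    IsTie (P.ballot i) Y → IsTie (P.ballot j) Y → StrictLinOn L Y →
    (P.updBallot i (breakTie (P.ballot i) Y L)).updBallot j
        (breakTie (P.ballot j) Y (fun a b => L b a)) ∈ D →
    F P = F ((P.updBallot i (breakTie (P.ballot i) Y L)).updBallot j
        (breakTie (P.ballot j) Y (fun a b => L b a)))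

/-- Neutral Indifference: adding one voter with the fully indifferent (empty)
ballot does not change the outcome. -/
def NeutralIndifference (D : Set (Profile V X)) (F : Profile V X → α) : Prop :=
  ∀ P ∈ D, ∀ i : V, i ∉ P.voters →
    P.addVoter i (fun _ _ => False) ∈ D →
    F P = F (P.addVoter i (fun _ _ => False))

/-- Homogeneity: doubling the profile (with fresh voters) does not change the
outcome. -/
def Homogeneous [Nonempty V] (D : Set (Profile V X)) (F : Profile V X → α) : Prop :=
  ∀ P ∈ D, ∀ φ : V → V, Function.Injective φ → (∀ i, φ i ∉ P.voters) →
    P.double φ ∈ D → F P = F (P.double φ)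

/-- Head-to-head voting rule: the outcome is determined by the pairwise
support counts together with the number of voters. -/
def HeadToHead (D : Set (Profile V X)) (F : Profile V X → α) : Prop :=
  ∀ P ∈ D, ∀ Q ∈ D, (∀ a b : X, P.count a b = Q.count a b) →
    P.voters.card = Q.voters.card → F P = F Q

/-- C2 voting rule: the outcome is determined by the pairwise support counts. -/
def C2 (D : Set (Profile V X)) (F : Profile V X → α) : Prop :=
  ∀ P ∈ D, ∀ Q ∈ D, (∀ a b : X, P.count a b = Q.count a b) → F P = F Q

/-- Margin-based voting rule. -/
def MarginBased (D : Set (Profile V X)) (F : Profile V X → α) : Prop :=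
  ∀ P ∈ D, ∀ Q ∈ D, (∀ a b : X, P.margin a b = Q.margin a b) → F P = F Q

set_option linter.unusedSectionVars false

section Aux

variable [Infinite V] (F : Profile V X → α)

/-- Comparability weight of a pair under a relation. -/
def compZ (R : X → X → Prop) (a b : X) : ℤ :=
  (if R a b then 1 else 0) + (if R b a then 1 else 0)

lemma IsSWO.rev {R : X → X → Prop} (hR : IsSWO R) : IsSWO (fun a b => R b a) :=
  ⟨fun a b h => hR.1 b a h, fun a b c hab hbc => hR.2 c b a hbc hab⟩

lemma isSWO_false : IsSWO (fun _ _ : X => False) :=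
  ⟨fun _ _ h => h.elim, fun _ _ _ _ _ h => h⟩

lemma count_addVoter (P : Profile V X) {i : V} (hi : i ∉ P.voters)
    (R : X → X → Prop) (a b : X) :
    (P.addVoter i R).count a b = P.count a b + (if R a b then 1 else 0) := by
  classical
  simp only [Profile.count, Profile.addVoter]
  show (Finset.filter (fun k => Function.update P.ballot i R k a b) (insert i P.voters)).card = _
  rw [Finset.filter_insert]
  have hfe : Finset.filter (fun k => Function.update P.ballot i R k a b) P.voters
      = Finset.filter (fun k => P.ballot k a b) P.voters := by
    apply Finset.filter_congr
    intro k hk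
    have hk' : k ≠ i := fun h => hi (h ▸ hk)
    simp [Function.update_of_ne hk']
  by_cases h : R a b
  · rw [if_pos (by simpa using h), hfe,
      Finset.card_insert_of_notMem (fun hmem => hi (Finset.mem_filter.mp hmem).1), if_pos h]
  · rw [if_neg (by simpa using h), hfe, if_neg h, Nat.add_zero]

lemma mem_addVoter_SWO {P : Profile V X} (hP : P ∈ SWOProfiles V X) (i : V)
    {R : X → X → Prop} (hR : IsSWO R) : P.addVoter i R ∈ SWOProfiles V X := by
  refine ⟨⟨i, Finset.mem_insert_self i _⟩, ?_⟩
  intro k hk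
  by_cases hki : k = i
  · subst hki
    simpa [Profile.addVoter, Function.update_self] using hR
  · rcases Finset.mem_insert.mp hk with h | h
    · exact absurd h hki
    · simpa [Profile.addVoter, Function.update_of_ne hki] using hP.2 k h

lemma count_self_zero {P : Profile V X} (hP : P ∈ SWOProfiles V X) (x : X) :
    P.count x x = 0 := by
  classical
  rw [Profile.count, Finset.card_eq_zero, Finset.filter_eq_empty_iff]
  intro i hi h
  exact (hP.2 i hi).1 x x h h

/-- Adding one reversal pair of SWO ballots. -/
lemma step_pair (hNNR : NonlinearNeutralReversal (SWOProfiles V X) F)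
    (R : X → X → Prop) (hR : IsSWO R) (P : Profile V X) (hP : P ∈ SWOProfiles V X) :
    ∃ P' ∈ SWOProfiles V X, F P' = F P ∧ P'.voters.card = P.voters.card + 2 ∧
      ∀ a b, (P'.count a b : ℤ) = P.count a b + compZ R a b := by
  obtain ⟨i, hi⟩ := Infinite.exists_notMem_finset P.voters
  obtain ⟨j, hj⟩ := Infinite.exists_notMem_finset (insert i P.voters)
  have hji : j ≠ i := fun h => hj (by rw [h]; exact Finset.mem_insert_self i _)
  have hjP : j ∉ P.voters := fun h => hj (Finset.mem_insert_of_mem h)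
  have hjP' : j ∉ (P.addVoter i R).voters := hj
  have hmem : (P.addVoter i R).addVoter j (fun a b => R b a) ∈ SWOProfiles V X :=
    mem_addVoter_SWO (mem_addVoter_SWO hP i hR) j hR.rev
  refine ⟨(P.addVoter i R).addVoter j (fun a b => R b a), hmem,
    (hNNR P hP i j hi hjP hji.symm R hR hmem).symm, ?_, ?_⟩
  · show (insert j (insert i P.voters)).card = _
    rw [Finset.card_insert_of_notMem hj, Finset.card_insert_of_notMem hi]
  · intro a b
    rw [count_addVoter _ hjP', count_addVoter _ hi]
    push_cast
    simp only [compZ]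
    ring

/-- Adding `n` reversal pairs of copies of one SWO ballot. -/
lemma step_copies (hNNR : NonlinearNeutralReversal (SWOProfiles V X) F)
    (R : X → X → Prop) (hR : IsSWO R) :
    ∀ (n : ℕ) (P : Profile V X), P ∈ SWOProfiles V X →
    ∃ P' ∈ SWOProfiles V X, F P' = F P ∧ P'.voters.card = P.voters.card + 2 * n ∧
      ∀ a b, (P'.count a b : ℤ) = P.count a b + n * compZ R a b := by
  intro n
  induction n with
  | zero => intro P hP; exact ⟨P, hP, rfl, by ring, fun a b => by push_cast; ring⟩
  | succ n ih =>
    intro P hP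
    obtain ⟨P1, hP1, hF1, hc1, hcnt1⟩ := ih P hP
    obtain ⟨P2, hP2, hF2, hc2, hcnt2⟩ := step_pair F hNNR R hR P1 hP1
    refine ⟨P2, hP2, hF2.trans hF1, by omega, fun a b => ?_⟩
    rw [hcnt2 a b, hcnt1 a b]
    push_cast
    ring

/-- Adding reversal pairs indexed by a finset of pairs with multiplicities. -/
lemma step_finset (hNNR : NonlinearNeutralReversal (SWOProfiles V X) F)
    (mult : X × X → ℕ) (rel : X × X → (X → X → Prop)) :
    ∀ (S : Finset (X × X)), (∀ p ∈ S, IsSWO (rel p)) →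
    ∀ (P : Profile V X), P ∈ SWOProfiles V X →
    ∃ P' ∈ SWOProfiles V X, F P' = F P ∧
      P'.voters.card = P.voters.card + 2 * ∑ p ∈ S, mult p ∧
      ∀ a b, (P'.count a b : ℤ) = P.count a b + ∑ p ∈ S, (mult p : ℤ) * compZ (rel p) a b := by
  classical
  intro S
  induction S using Finset.induction_on with
  | empty =>
    intro _ P hP
    exact ⟨P, hP, rfl, by simp, fun a b => by simp⟩
  | @insert q S hq ih =>
    intro hSWO P hP
    obtain ⟨P1, hP1, hF1, hc1, hcnt1⟩ := ih (fun p hp => hSWO p (Finset.mem_insert_of_mem hp)) P hP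
    obtain ⟨P2, hP2, hF2, hc2, hcnt2⟩ :=
      step_copies F hNNR (rel q) (hSWO q (Finset.mem_insert_self q S)) (mult q) P1 hP1
    refine ⟨P2, hP2, hF2.trans hF1, ?_, fun a b => ?_⟩
    · rw [Finset.sum_insert hq]; omega
    · rw [hcnt2 a b, hcnt1 a b, Finset.sum_insert hq]; ring

/-- Adding `k` fully indifferent voters. -/
lemma step_indiff (hNI : NeutralIndifference (SWOProfiles V X) F) :
    ∀ (k : ℕ) (P : Profile V X), P ∈ SWOProfiles V X →
    ∃ P' ∈ SWOProfiles V X, F P' = F P ∧ P'.voters.card = P.voters.card + k ∧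
      ∀ a b, P'.count a b = P.count a b := by
  intro k
  induction k with
  | zero => intro P hP; exact ⟨P, hP, rfl, rfl, fun _ _ => rfl⟩
  | succ k ih =>
    intro P hP
    obtain ⟨P1, hP1, hF1, hc1, hcnt1⟩ := ih P hP
    obtain ⟨i, hi⟩ := Infinite.exists_notMem_finset P1.voters
    have hmem : P1.addVoter i (fun _ _ => False) ∈ SWOProfiles V X :=
      mem_addVoter_SWO hP1 i isSWO_false
    refine ⟨P1.addVoter i (fun _ _ => False), hmem,
      (hNI P1 hP1 i hi hmem).symm.trans hF1, ?_, fun a b => ?_⟩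
    · show (insert i P1.voters).card = _
      rw [Finset.card_insert_of_notMem hi]; omega
    · rw [count_addVoter _ hi, if_neg not_false, hcnt1 a b, Nat.add_zero]

end Aux

section Merge

/-- A fixed linear (well-)order on `X`. -/
def wreln : X → X → Prop := WellOrderingRel

lemma wreln_irrefl (a : X) : ¬ wreln a a := irrefl_of WellOrderingRel a

lemma wreln_trans {a b c : X} (h1 : wreln a b) (h2 : wreln b c) : wreln a c :=
  trans_of WellOrderingRel h1 h2

lemma wreln_total (a b : X) (h : a ≠ b) : wreln a b ∨ wreln b a := by
  rcases trichotomous_of WellOrderingRel a b with h1 | h1 | h1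
  · exact Or.inl h1
  · exact absurd h1 h
  · exact Or.inr h1

lemma wreln_asymm {a b : X} (h : wreln a b) : ¬ wreln b a :=
  fun h' => wreln_irrefl a (wreln_trans h h')

lemma wreln_isSWO : IsSWO (wreln (X := X)) := by
  refine ⟨fun a b h => wreln_asymm h, fun a b c h1 h2 h3 => ?_⟩
  rcases trichotomous_of WellOrderingRel a b with h4 | h4 | h4
  · exact h1 h4
  · exact h2 (h4 ▸ h3)
  · exact h2 (wreln_trans h4 h3)

/-- The linear order `wreln` with `b` merged onto `a` (so `a, b` become tied). -/
def mergeRel (a b : X) : X → X → Prop := fun x y =>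
  wreln (if x = b then a else x) (if y = b then a else y)

lemma mergeRel_isSWO (a b : X) : IsSWO (mergeRel a b) :=
  ⟨fun _ _ h => wreln_isSWO.1 _ _ h, fun _ _ _ h1 h2 => wreln_isSWO.2 _ _ _ h1 h2⟩

lemma compZ_wreln (x y : X) : compZ wreln x y = if x = y then 0 else 1 := by
  by_cases h : x = y
  · subst h; simp [compZ, wreln_irrefl]
  · rcases wreln_total x y h with h1 | h1
    · simp [compZ, h, h1, wreln_asymm h1]
    · simp [compZ, h, h1, wreln_asymm h1]

lemma compZ_mergeRel {a b : X} (hab : a ≠ b) (x y : X) :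
    compZ (mergeRel a b) x y =
      if (x = y ∨ (x = a ∧ y = b) ∨ (x = b ∧ y = a)) then 0 else 1 := by
  have key : compZ (mergeRel a b) x y
      = compZ wreln (if x = b then a else x) (if y = b then a else y) := rfl
  rw [key, compZ_wreln]
  congr 1
  simp only [eq_iff_iff]
  constructor
  · intro h
    by_cases hx : x = b <;> by_cases hy : y = b <;> simp [hx, hy] at h ⊢ <;> tauto
  · intro h
    rcases h with h | ⟨h1, h2⟩ | ⟨h1, h2⟩ <;> subst_vars <;> simp [hab, Ne.symm hab]

end Merge

section Key

variable (d : X → X → ℤ)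

/-- Multiplicities of the added reversal pairs. -/
def multOf : X × X → ℕ := fun p => if wreln p.1 p.2 then (d p.1 p.2).natAbs else 0

/-- Relations added on the `P` side. -/
def relPOf : X × X → X → X → Prop := fun p =>
  if 0 ≤ d p.1 p.2 then mergeRel p.1 p.2 else wreln

/-- Relations added on the `Q` side. -/
def relQOf : X × X → X → X → Prop := fun p =>
  if 0 ≤ d p.1 p.2 then wreln else mergeRel p.1 p.2

lemma relPOf_isSWO (p : X × X) : IsSWO (relPOf d p) := by
  unfold relPOf; split_ifs; exacts [mergeRel_isSWO _ _, wreln_isSWO]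

lemma relQOf_isSWO (p : X × X) : IsSWO (relQOf d p) := by
  unfold relQOf; split_ifs; exacts [wreln_isSWO, mergeRel_isSWO _ _]

lemma key_pt (hdsymm : ∀ a b, d a b = d b a) (x y : X) (p : X × X) :
    (multOf d p : ℤ) * compZ (relQOf d p) x y - (multOf d p : ℤ) * compZ (relPOf d p) x y
      = (if p = (x, y) then (if wreln x y then d x y else 0) else 0)
      + (if p = (y, x) then (if wreln y x then d x y else 0) else 0) := by
  classical
  obtain ⟨a, b⟩ := p
  simp only [multOf, relPOf, relQOf, Prod.mk.injEq]
  by_cases hab : wreln a b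
  · have hane : a ≠ b := fun h => wreln_irrefl a (h ▸ hab)
    have hane' : b ≠ a := Ne.symm hane
    rw [if_pos hab, apply_ite (fun R : X → X → Prop => compZ R x y),
      apply_ite (fun R : X → X → Prop => compZ R x y)]
    simp only [compZ_wreln, compZ_mergeRel hane]
    by_cases h1 : a = x ∧ b = y
    · obtain ⟨rfl, rfl⟩ := h1
      simp only [hab, hane, hane', eq_self_iff_true, and_true, true_and, and_false,
        false_and, and_self, or_true, true_or, false_or, or_false, if_true, if_false,
        ite_true, ite_false]
      split_ifs <;> omega
    · by_cases h2 : a = y ∧ b = x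
      · obtain ⟨rfl, rfl⟩ := h2
        have hsym := hdsymm a b
        simp only [hab, hane, hane', eq_self_iff_true, and_true, true_and, and_false,
          false_and, and_self, or_true, true_or, false_or, or_false, if_true, if_false,
          ite_true, ite_false]
        split_ifs <;> omega
      · by_cases hxy : x = y
        · subst hxy
          simp only [h1, h2, eq_self_iff_true, true_or, if_true, if_false,
            ite_true, ite_false]
          split_ifs <;> omega
        · have hC1 : ¬(x = a ∧ y = b) := fun h => h1 ⟨h.1.symm, h.2.symm⟩
          have hC2 : ¬(x = b ∧ y = a) := fun h => h2 ⟨h.2.symm, h.1.symm⟩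
          simp only [h1, h2, hxy, hC1, hC2, false_or, or_self, if_true, if_false,
            ite_true, ite_false]
          split_ifs <;> omega
  · rw [if_neg hab]
    have e1 : (if a = x ∧ b = y then (if wreln x y then d x y else 0) else 0) = 0 := by
      by_cases h : a = x ∧ b = y
      · obtain ⟨rfl, rfl⟩ := h
        simp [hab]
      · rw [if_neg h]
    have e2 : (if a = y ∧ b = x then (if wreln y x then d x y else 0) else 0) = 0 := by
      by_cases h : a = y ∧ b = x
      · obtain ⟨rfl, rfl⟩ := h
        simp [hab]
      · rw [if_neg h]
    rw [e1, e2]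
    push_cast
    ring

lemma key_sum [Fintype X] (hdsymm : ∀ a b, d a b = d b a) (hdzero : ∀ x, d x x = 0)
    (x y : X) :
    ∑ p ∈ Finset.univ, ((multOf d p : ℤ) * compZ (relQOf d p) x y
        - (multOf d p : ℤ) * compZ (relPOf d p) x y) = d x y := by
  classical
  rw [Finset.sum_congr rfl fun p _ => key_pt d hdsymm x y p, Finset.sum_add_distrib]
  rw [Finset.sum_ite_eq' Finset.univ (x, y) fun _ => (if wreln x y then d x y else 0),
    Finset.sum_ite_eq' Finset.univ (y, x) fun _ => (if wreln y x then d x y else 0)]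
  simp only [Finset.mem_univ, if_true]
  by_cases hxy : x = y
  · subst hxy
    simp [wreln_irrefl x, hdzero x]
  · rcases wreln_total x y hxy with h | h
    · rw [if_pos h, if_neg (wreln_asymm h)]; ring
    · rw [if_neg (wreln_asymm h), if_pos h]; ring

end Key

/-- a head-to-head voting rule on the domain of all profiles of
strict weak orders is margin-based iff it satisfies Nonlinear Neutral Reversal
and Neutral Indifference. -/
theorem stmt12 [Infinite V] [Fintype X] (F : Profile V X → α)
    (hH : HeadToHead (SWOProfiles V X) F) :
    MarginBased (SWOProfiles V X) F ↔
      NonlinearNeutralReversal (SWOProfiles V X) F ∧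
        NeutralIndifference (SWOProfiles V X) F := by
  classical
  constructor
  · intro hM
    constructor
    · intro P hP i j hi hj hij R hR hmem
      have hj' : j ∉ (P.addVoter i R).voters := by
        simp only [Profile.addVoter, Finset.mem_insert]
        rintro (h | h)
        · exact hij h.symm
        · exact hj h
      refine hM P hP _ hmem fun a b => ?_
      simp only [Profile.margin]
      rw [count_addVoter _ hj', count_addVoter _ hi, count_addVoter _ hj', count_addVoter _ hi]
      push_cast
      ring
    · intro P hP i hi hmem
      refine hM P hP _ hmem fun a b => ?_
      simp only [Profile.margin]
      rw [count_addVoter _ hi, count_addVoter _ hi]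
      simp
  · rintro ⟨hNNR, hNI⟩ P hP Q hQ hm
    set d : X → X → ℤ := fun a b => (P.count a b : ℤ) - Q.count a b with hd
    have hdsymm : ∀ a b, d a b = d b a := by
      intro a b
      have h := hm a b
      simp only [Profile.margin] at h
      simp only [hd]
      omega
    have hdzero : ∀ x, d x x = 0 := by
      intro x
      simp [hd, count_self_zero hP, count_self_zero hQ]
    obtain ⟨P1, hP1, hFP1, hcP1, hcntP1⟩ :=
      step_finset F hNNR (multOf d) (relPOf d) Finset.univ
        (fun p _ => relPOf_isSWO d p) P hP
    obtain ⟨Q1, hQ1, hFQ1, hcQ1, hcntQ1⟩ :=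
      step_finset F hNNR (multOf d) (relQOf d) Finset.univ
        (fun p _ => relQOf_isSWO d p) Q hQ
    obtain ⟨P2, hP2, hFP2, hcP2, hcntP2⟩ := step_indiff F hNI Q.voters.card P1 hP1
    obtain ⟨Q2, hQ2, hFQ2, hcQ2, hcntQ2⟩ := step_indiff F hNI P.voters.card Q1 hQ1
    have hkey : ∀ x y : X, P1.count x y = Q1.count x y := by
      intro x y
      have hs := key_sum d hdsymm hdzero x y
      rw [Finset.sum_sub_distrib] at hs
      have h1 := hcntP1 x y
      have h2 := hcntQ1 x y
      have : (P1.count x y : ℤ) = Q1.count x y := by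
        rw [h1, h2]
        have hdxy : d x y = (P.count x y : ℤ) - Q.count x y := rfl
        omega
      exact_mod_cast this
    have hcounts : ∀ x y : X, P2.count x y = Q2.count x y := by
      intro x y
      rw [hcntP2, hcntQ2, hkey]
    have hcards : P2.voters.card = Q2.voters.card := by
      omega
    calc F P = F P2 := (hFP2.trans hFP1).symm
      _ = F Q2 := hH P2 hP2 Q2 hQ2 hcounts hcards
      _ = F Q := hFQ2.trans hFQ1

end
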